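/- arXiv:2410.23225 — 2 statements merged into one kernel-verified Lean document; each statement's English description precedes it below -/
import Mathlib

section
/- Let μ be the Gibbs distribution of a permissive spin system (G,q,A_E,A_V) and suppose μ satisfies C-coupling independence for some C > 0. Let R > 0 be an integer. Then for every Λ ⊆ V and all partial configurations σ,τ : Λ → [q] that differ only at a vertex v ∈ Λ, there exists a coupling 𝒞 of μ^σ and μ^τ such that E_{(σ',τ')∼𝒞}[ Σ_{u ∈ S_R(v)} 1[σ'(u) ≠ τ'(u)] ] ≤ 2C·(1/2)^{⌈R/(2C)⌉}. -/
open scoped Classical BigOperators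

noncomputable section

namespace SpinFormal

variable {V : Type} [Fintype V] [DecidableEq V] {q : ℕ}

/-- `μ` is a probability distribution on the finite type `Ω`. -/
def IsDist {Ω : Type} [Fintype Ω] (μ : Ω → ℝ) : Prop :=
  (∀ x, 0 ≤ μ x) ∧ ∑ x, μ x = 1

/-- `π` is a coupling of `μ` and `ν`. -/
def IsCoupling {Ω₁ Ω₂ : Type} [Fintype Ω₁] [Fintype Ω₂]
    (π : Ω₁ × Ω₂ → ℝ) (μ : Ω₁ → ℝ) (ν : Ω₂ → ℝ) : Prop :=
  (∀ p, 0 ≤ π p) ∧ (∀ x, ∑ y, π (x, y) = μ x) ∧ (∀ y, ∑ x, π (x, y) = ν y)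

/-- 1-Wasserstein distance with respect to a cost `d`. -/
def Wass {Ω₁ Ω₂ : Type} [Fintype Ω₁] [Fintype Ω₂] (d : Ω₁ → Ω₂ → ℝ)
    (μ : Ω₁ → ℝ) (ν : Ω₂ → ℝ) : ℝ :=
  sInf {c : ℝ | ∃ π : Ω₁ × Ω₂ → ℝ, IsCoupling π μ ν ∧ ∑ p : Ω₁ × Ω₂, π p * d p.1 p.2 = c}

/-- Hamming distance between two configurations, as a real number. -/
def hamming {W : Type} [Fintype W] {α : Type} [DecidableEq α] (σ τ : W → α) : ℝ :=
  ((Finset.univ.filter fun w => σ w ≠ τ w).card : ℝ)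

/-- Total variation distance between two functions on a finite type. -/
def tvDist {X : Type} [Fintype X] (μ ν : X → ℝ) : ℝ := (∑ x, |μ x - ν x|) / 2

/-- The symmetrised edge interaction, as a function on unordered pairs.
When `AE` is symmetric this is just `AE (τ u) (τ v)` on the edge `{u,v}`. -/
def edgeFactor (AE : Fin q → Fin q → ℝ) (τ : V → Fin q) : Sym2 V → ℝ :=
  Sym2.lift ⟨fun u v => (AE (τ u) (τ v) + AE (τ v) (τ u)) / 2, fun u v => by simp [add_comm]⟩

/-- The conditional weight `w^σ(τ)` for the pinning `σ` on `Λ`: products range over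
vertices outside `Λ` and edges with at least one endpoint outside `Λ`. -/
def condWeight (G : SimpleGraph V) (AE : Fin q → Fin q → ℝ) (AV : Fin q → ℝ)
    (Λ : Finset V) (σ τ : V → Fin q) : ℝ :=
  (if ∀ v ∈ Λ, τ v = σ v then (1 : ℝ) else 0)
    * (∏ v ∈ Λᶜ, AV (τ v))
    * ∏ e ∈ Finset.univ.filter
        (fun e : Sym2 V => e ∈ G.edgeSet ∧ ¬ ∀ v ∈ e, v ∈ Λ), edgeFactor AE τ e

/-- The conditional partition function `Z^σ`. -/
def condZ (G : SimpleGraph V) (AE : Fin q → Fin q → ℝ) (AV : Fin q → ℝ)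
    (Λ : Finset V) (σ : V → Fin q) : ℝ :=
  ∑ τ : V → Fin q, condWeight G AE AV Λ σ τ

/-- The conditional Gibbs distribution `μ^σ`. -/
def condDist (G : SimpleGraph V) (AE : Fin q → Fin q → ℝ) (AV : Fin q → ℝ)
    (Λ : Finset V) (σ : V → Fin q) : (V → Fin q) → ℝ :=
  fun τ => condWeight G AE AV Λ σ τ / condZ G AE AV Λ σ

/-- A spin system is permissive if every conditional partition function is positive. -/
def Permissive (G : SimpleGraph V) (AE : Fin q → Fin q → ℝ) (AV : Fin q → ℝ) : Prop :=
  ∀ (Λ : Finset V) (σ : V → Fin q), 0 < condZ G AE AV Λ σ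

/-- Marginal of a distribution on configurations at a single vertex. -/
def marginalAt (μ : (V → Fin q) → ℝ) (u : V) (c : Fin q) : ℝ :=
  ∑ τ : V → Fin q, if τ u = c then μ τ else 0

/-- Marginal probability of a partial configuration `σ` on `Λ`. -/
def margOn (μ : (V → Fin q) → ℝ) (Λ : Finset V) (σ : V → Fin q) : ℝ :=
  ∑ τ : V → Fin q, if ∀ v ∈ Λ, τ v = σ v then μ τ else 0

/-- Two partial configurations on `Λ` differ exactly at the vertex `v ∈ Λ`. -/
def DifferOnlyAt (Λ : Finset V) (σ τ : V → Fin q) (v : V) : Prop :=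
  v ∈ Λ ∧ σ v ≠ τ v ∧ ∀ u ∈ Λ, u ≠ v → σ u = τ u

/-- `C`-coupling independence of the Gibbs distribution of a spin system. -/
def CouplingIndependence (G : SimpleGraph V) (AE : Fin q → Fin q → ℝ)
    (AV : Fin q → ℝ) (C : ℝ) : Prop :=
  ∀ (Λ : Finset V) (σ τ : V → Fin q) (v : V), DifferOnlyAt Λ σ τ v →
    Wass hamming (condDist G AE AV Λ σ) (condDist G AE AV Λ τ) ≤ C

/-- The sphere of radius `ℓ` around `v` in `G` (w.r.t. graph distance). -/
def sphere (G : SimpleGraph V) (v : V) (ℓ : ℕ) : Finset V :=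
  Finset.univ.filter fun u => G.Reachable v u ∧ G.dist v u = ℓ

end SpinFormal

open SpinFormal

/-! Coupling independence bounds the cost of flipping one pinned vertex by `C`; since the flipped
vertex itself always disagrees, for every `ε > C - 1` some coupling of the flip has fewer than `ε`
expected disagreements elsewhere. Start from such a coupling and iterate: if a coupling has `D` expected disagreements beyond the ball of radius `m`,
some sphere of radius `r ∈ (m, m + s]` carries at most `D / s` of them. Pin each pair of samples on
`Λ` and on the ball of radius `r`, flip the disagreeing sphere vertices one at a time, and couple
the remaining pinnings, which now agree on the boundary, identically off the pinned set; by the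
tower property the result is again a coupling of `μ^σ` and `μ^τ`, now with at most `ε D / s`
disagreements beyond radius `r`. With `s = ⌊2C⌋₊` and `ε = s / 2` every round halves the bound,
and `⌈R / (2C)⌉ - 1` rounds of `s` radii stay below `R`. -/

namespace SpinFormal

section Coupling

variable {Ω₁ Ω₂ Ω₃ Ω₄ : Type} [Fintype Ω₁] [Fintype Ω₂] [Fintype Ω₃] [Fintype Ω₄]

def expectedCost (d : Ω₁ → Ω₂ → ℝ) (π : Ω₁ × Ω₂ → ℝ) : ℝ :=
  ∑ p, π p * d p.1 p.2

lemma expectedCost_mono {d d' : Ω₁ → Ω₂ → ℝ} {π : Ω₁ × Ω₂ → ℝ} (hπ : ∀ p, 0 ≤ π p)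
    (h : ∀ x y, d x y ≤ d' x y) : expectedCost d π ≤ expectedCost d' π :=
  Finset.sum_le_sum fun p _ => mul_le_mul_of_nonneg_left (h p.1 p.2) (hπ p)

lemma expectedCost_nonneg {d : Ω₁ → Ω₂ → ℝ} {π : Ω₁ × Ω₂ → ℝ} (hπ : ∀ p, 0 ≤ π p)
    (hd : ∀ x y, 0 ≤ d x y) : 0 ≤ expectedCost d π :=
  Finset.sum_nonneg fun p _ => mul_nonneg (hπ p) (hd p.1 p.2)

namespace IsCoupling

variable {π : Ω₁ × Ω₂ → ℝ} {μ : Ω₁ → ℝ} {ν : Ω₂ → ℝ}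

lemma le_left (hπ : IsCoupling π μ ν) (p : Ω₁ × Ω₂) : π p ≤ μ p.1 :=
  hπ.2.1 p.1 ▸ Finset.single_le_sum (fun y _ => hπ.1 (p.1, y)) (Finset.mem_univ p.2)

lemma le_right (hπ : IsCoupling π μ ν) (p : Ω₁ × Ω₂) : π p ≤ ν p.2 :=
  hπ.2.2 p.2 ▸ Finset.single_le_sum (fun x _ => hπ.1 (x, p.2)) (Finset.mem_univ p.1)

lemma left_ne_zero (hπ : IsCoupling π μ ν) {p : Ω₁ × Ω₂} (h : π p ≠ 0) : μ p.1 ≠ 0 :=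
  fun h0 => h (le_antisymm (h0 ▸ hπ.le_left p) (hπ.1 p))

lemma right_ne_zero (hπ : IsCoupling π μ ν) {p : Ω₁ × Ω₂} (h : π p ≠ 0) : ν p.2 ≠ 0 :=
  fun h0 => h (le_antisymm (h0 ▸ hπ.le_right p) (hπ.1 p))

lemma sum_eq (hπ : IsCoupling π μ ν) : ∑ p, π p = ∑ x, μ x := by
  rw [Fintype.sum_prod_type]
  exact Finset.sum_congr rfl fun x _ => hπ.2.1 x

/-- Gluing along the common marginal `ν`: draw `(x, y)` from `π`, then `z` from `π₂` given `y`. -/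
lemma glue {ξ : Ω₃ → ℝ} {π₂ : Ω₂ × Ω₃ → ℝ} (hπ : IsCoupling π μ ν) (hπ₂ : IsCoupling π₂ ν ξ)
    {d₁ : Ω₁ → Ω₂ → ℝ} {d₂ : Ω₂ → Ω₃ → ℝ} {d : Ω₁ → Ω₃ → ℝ}
    (hd : ∀ x y z, d x z ≤ d₁ x y + d₂ y z) :
    ∃ π₃ : Ω₁ × Ω₃ → ℝ, IsCoupling π₃ μ ξ ∧
      expectedCost d π₃ ≤ expectedCost d₁ π + expectedCost d₂ π₂ := by
  have hν : ∀ y, 0 ≤ ν y := fun y => hπ.2.2 y ▸ Finset.sum_nonneg fun x _ => hπ.1 (x, y)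
  set t : Ω₁ → Ω₂ → Ω₃ → ℝ := fun x y z => π (x, y) * π₂ (y, z) / ν y with ht
  have ht0 : ∀ x y z, 0 ≤ t x y z := fun x y z =>
    div_nonneg (mul_nonneg (hπ.1 _) (hπ₂.1 _)) (hν y)
  have hcancel : ∀ (a : ℝ) (y : Ω₂), (ν y = 0 → a = 0) → a * ν y / ν y = a := fun a y h => by
    by_cases hy : ν y = 0
    · rw [hy, h hy, zero_mul, zero_div]
    · exact mul_div_cancel_right₀ a hy
  have hsum_z : ∀ x y, ∑ z, t x y z = π (x, y) := fun x y => by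
    simp only [ht, ← Finset.sum_div, ← Finset.mul_sum, hπ₂.2.1 y]
    exact hcancel _ _ fun h => le_antisymm (h ▸ hπ.le_right (x, y)) (hπ.1 _)
  have hsum_x : ∀ y z, ∑ x, t x y z = π₂ (y, z) := fun y z => by
    simp only [ht, ← Finset.sum_div, ← Finset.sum_mul, hπ.2.2 y, mul_comm (ν y)]
    exact hcancel _ _ fun h => le_antisymm (h ▸ hπ₂.le_left (y, z)) (hπ₂.1 _)
  refine ⟨fun p => ∑ y, t p.1 y p.2, ⟨fun p => Finset.sum_nonneg fun y _ => ht0 _ _ _,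
    fun x => ?_, fun z => ?_⟩, ?_⟩
  · rw [Finset.sum_comm]
    simp only [hsum_z, hπ.2.1 x]
  · rw [Finset.sum_comm]
    simp only [hsum_x, hπ₂.2.2 z]
  · have h₁ : expectedCost d₁ π = ∑ x, ∑ y, ∑ z, t x y z * d₁ x y := by
      simp only [expectedCost, Fintype.sum_prod_type, ← hsum_z, Finset.sum_mul]
    have h₂ : expectedCost d₂ π₂ = ∑ x, ∑ y, ∑ z, t x y z * d₂ y z := by
      simp only [expectedCost, Fintype.sum_prod_type, ← hsum_x, Finset.sum_mul]
      calc _ = ∑ y, ∑ x, ∑ z, t x y z * d₂ y z := Finset.sum_congr rfl fun _ _ => Finset.sum_comm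
        _ = _ := Finset.sum_comm
    have h : expectedCost d (fun p => ∑ y, t p.1 y p.2) = ∑ x, ∑ y, ∑ z, t x y z * d x z := by
      simp only [expectedCost, Fintype.sum_prod_type, Finset.sum_mul]
      exact Finset.sum_congr rfl fun _ _ => Finset.sum_comm
    simp only [h, h₁, h₂, ← Finset.sum_add_distrib, ← mul_add]
    gcongr with x _ y _ z _
    · exact ht0 x y z
    · exact hd x y z

lemma bind (hπ : IsCoupling π μ ν) {K : Ω₁ → Ω₃ → ℝ} {L : Ω₂ → Ω₄ → ℝ}
    {κ : Ω₁ × Ω₂ → Ω₃ × Ω₄ → ℝ} (hκ : ∀ p, IsCoupling (κ p) (K p.1) (L p.2)) :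
    IsCoupling (fun r => ∑ p, π p * κ p r)
      (fun x => ∑ a, μ a * K a x) (fun y => ∑ b, ν b * L b y) := by
  refine ⟨fun r => Finset.sum_nonneg fun p _ => mul_nonneg (hπ.1 p) ((hκ p).1 r),
    fun x => ?_, fun y => ?_⟩
  · rw [Finset.sum_comm]
    simp only [← Finset.mul_sum, (hκ _).2.1, Fintype.sum_prod_type, ← Finset.sum_mul, hπ.2.1]
  · rw [Finset.sum_comm]
    simp only [← Finset.mul_sum, (hκ _).2.2, Fintype.sum_prod_type_right, ← Finset.sum_mul,
      hπ.2.2]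

end IsCoupling

lemma expectedCost_bind (d : Ω₃ → Ω₄ → ℝ) (π : Ω₁ × Ω₂ → ℝ) (κ : Ω₁ × Ω₂ → Ω₃ × Ω₄ → ℝ) :
    expectedCost d (fun r => ∑ p, π p * κ p r) = ∑ p, π p * expectedCost d (κ p) := by
  simp only [expectedCost, Finset.sum_mul, Finset.mul_sum, mul_assoc]
  exact Finset.sum_comm

lemma isCoupling_mul {μ : Ω₁ → ℝ} {ν : Ω₂ → ℝ} (hμ : IsDist μ) (hν : IsDist ν) :
    IsCoupling (fun p => μ p.1 * ν p.2) μ ν :=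
  ⟨fun p => mul_nonneg (hμ.1 _) (hν.1 _),
    fun x => by dsimp only; rw [← Finset.mul_sum, hν.2, mul_one],
    fun y => by dsimp only; rw [← Finset.sum_mul, hμ.2, one_mul]⟩

def graphCoupling (f : Ω₁ → Ω₂) (μ : Ω₁ → ℝ) (p : Ω₁ × Ω₂) : ℝ :=
  if p.2 = f p.1 then μ p.1 else 0

lemma isCoupling_graphCoupling (e : Ω₁ ≃ Ω₂) {μ : Ω₁ → ℝ} {ν : Ω₂ → ℝ} (hμ : ∀ x, 0 ≤ μ x)
    (he : ∀ x, ν (e x) = μ x) : IsCoupling (graphCoupling e μ) μ ν := by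
  refine ⟨fun p => ?_, fun x => ?_, fun y => ?_⟩
  · unfold graphCoupling
    split_ifs
    exacts [hμ _, le_rfl]
  · simp [graphCoupling]
  · simp only [graphCoupling, ← e.symm_apply_eq, Finset.sum_ite_eq, Finset.mem_univ, if_true]
    rw [← he, e.apply_symm_apply]

lemma expectedCost_graphCoupling (d : Ω₁ → Ω₂ → ℝ) (f : Ω₁ → Ω₂) (μ : Ω₁ → ℝ) :
    expectedCost d (graphCoupling f μ) = ∑ x, μ x * d x (f x) := by
  simp [expectedCost, graphCoupling, Fintype.sum_prod_type, ite_mul]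

section Wasserstein

variable {d : Ω₁ → Ω₂ → ℝ} {μ : Ω₁ → ℝ} {ν : Ω₂ → ℝ}

lemma wass_set_nonempty (hμ : IsDist μ) (hν : IsDist ν) :
    {c : ℝ | ∃ π : Ω₁ × Ω₂ → ℝ, IsCoupling π μ ν ∧ expectedCost d π = c}.Nonempty :=
  ⟨_, _, isCoupling_mul hμ hν, rfl⟩

lemma exists_expectedCost_lt_of_wass_lt (hμ : IsDist μ) (hν : IsDist ν) {c : ℝ}
    (h : Wass d μ ν < c) : ∃ π, IsCoupling π μ ν ∧ expectedCost d π < c := by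
  obtain ⟨_, ⟨π, hπ, rfl⟩, hlt⟩ := exists_lt_of_csInf_lt (wass_set_nonempty hμ hν) h
  exact ⟨π, hπ, hlt⟩

lemma le_wass (hμ : IsDist μ) (hν : IsDist ν) {b : ℝ}
    (h : ∀ π, IsCoupling π μ ν → b ≤ expectedCost d π) : b ≤ Wass d μ ν :=
  le_csInf (wass_set_nonempty hμ hν) fun _ ⟨π, hπ, hc⟩ => hc ▸ h π hπ

end Wasserstein

end Coupling

section Disagreement

variable {W α : Type} [DecidableEq α]

def disagreeOn (S : Finset W) (x y : W → α) : ℝ :=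
  ((S.filter fun u => x u ≠ y u).card : ℝ)

lemma disagreeOn_nonneg (S : Finset W) (x y : W → α) : 0 ≤ disagreeOn S x y :=
  Nat.cast_nonneg _

lemma disagreeOn_univ [Fintype W] (x y : W → α) : disagreeOn Finset.univ x y = hamming x y := rfl

lemma disagreeOn_eq_zero {S : Finset W} {x y : W → α} (h : ∀ u ∈ S, x u = y u) :
    disagreeOn S x y = 0 := by
  simp [disagreeOn, Finset.filter_eq_empty_iff.mpr fun u hu => not_not.mpr (h u hu)]

lemma disagreeOn_le_disagreeOn {S T : Finset W} {x y : W → α}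
    (h : ∀ u ∈ S, x u ≠ y u → u ∈ T) : disagreeOn S x y ≤ disagreeOn T x y := by
  refine Nat.cast_le.mpr (Finset.card_le_card fun u hu => ?_)
  rw [Finset.mem_filter] at hu ⊢
  exact ⟨h u hu.1 hu.2, hu.2⟩

lemma disagreeOn_mono {S T : Finset W} (hST : S ⊆ T) (x y : W → α) :
    disagreeOn S x y ≤ disagreeOn T x y :=
  disagreeOn_le_disagreeOn fun _ hu _ => hST hu

lemma disagreeOn_triangle (S : Finset W) (x y z : W → α) :
    disagreeOn S x z ≤ disagreeOn S x y + disagreeOn S y z := by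
  unfold disagreeOn
  rw [← Nat.cast_add, Nat.cast_le]
  refine (Finset.card_le_card fun u => ?_).trans (Finset.card_union_le _ _)
  simp only [Finset.mem_filter, Finset.mem_union]
  exact fun ⟨hu, hxz⟩ => by by_cases hxy : x u = y u <;> simp_all

lemma disagreeOn_insert {S : Finset W} {u : W} (hu : u ∉ S) {x y : W → α} (h : x u ≠ y u) :
    disagreeOn (insert u S) x y = disagreeOn S x y + 1 := by
  simp [disagreeOn, Finset.filter_insert, h, hu]

lemma sum_disagreeOn_le {ι : Type} {I : Finset ι} {S : ι → Finset W} {T : Finset W}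
    (hS : Set.PairwiseDisjoint I S) (hST : ∀ i ∈ I, S i ⊆ T) (x y : W → α) :
    ∑ i ∈ I, disagreeOn (S i) x y ≤ disagreeOn T x y := by
  have hdisj : Set.PairwiseDisjoint I fun i => (S i).filter fun u => x u ≠ y u :=
    hS.mono fun i => Finset.filter_subset _ _
  calc ∑ i ∈ I, disagreeOn (S i) x y = disagreeOn (I.biUnion S) x y := by
        simp only [disagreeOn, Finset.filter_biUnion, Finset.card_biUnion hdisj, Nat.cast_sum]
    _ ≤ disagreeOn T x y := disagreeOn_mono (Finset.biUnion_subset.mpr hST) x y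

end Disagreement

section EdgeFactor

variable {V : Type} {q : ℕ} {AE : Fin q → Fin q → ℝ}

lemma edgeFactor_congr {x x' : V → Fin q} {e : Sym2 V} (h : ∀ u ∈ e, x u = x' u) :
    edgeFactor AE x e = edgeFactor AE x' e := by
  induction e using Sym2.ind with
  | _ u w => simp only [edgeFactor, Sym2.lift_mk, h u (Sym2.mem_mk_left u w),
      h w (Sym2.mem_mk_right u w)]

lemma edgeFactor_nonneg (hAE : ∀ i j, 0 ≤ AE i j) (x : V → Fin q) (e : Sym2 V) :
    0 ≤ edgeFactor AE x e := by
  induction e using Sym2.ind with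
  | _ u w => exact div_nonneg (add_nonneg (hAE _ _) (hAE _ _)) zero_le_two

end EdgeFactor

section PinSwap

variable {V α : Type} [DecidableEq V] [DecidableEq α]

/-- Carries configurations pinned to `ρ` on `P` to configurations pinned to `ρ'` on `P`. -/
def pinSwap (P : Finset V) (ρ ρ' : V → α) : (V → α) ≃ (V → α) :=
  Equiv.piCongrRight fun u => if u ∈ P then Equiv.swap (ρ u) (ρ' u) else Equiv.refl α

lemma pinSwap_apply_of_mem {P : Finset V} {u : V} (hu : u ∈ P)
    (ρ ρ' x : V → α) : pinSwap P ρ ρ' x u = Equiv.swap (ρ u) (ρ' u) (x u) := by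
  simp [pinSwap, hu]

lemma pinSwap_apply_of_notMem {P : Finset V} {u : V} (hu : u ∉ P)
    (ρ ρ' x : V → α) : pinSwap P ρ ρ' x u = x u := by
  simp [pinSwap, hu]

lemma pinSwap_apply_of_eq {P : Finset V} {ρ ρ' : V → α} {u : V}
    (h : u ∈ P → ρ u = ρ' u) (x : V → α) : pinSwap P ρ ρ' x u = x u := by
  by_cases hu : u ∈ P
  · rw [pinSwap_apply_of_mem hu, h hu, Equiv.swap_self, Equiv.refl_apply]
  · exact pinSwap_apply_of_notMem hu ρ ρ' x

end PinSwap

section Gibbs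

variable {V : Type} [Fintype V] [DecidableEq V] {q : ℕ}
  {G : SimpleGraph V} {AE : Fin q → Fin q → ℝ} {AV : Fin q → ℝ}

def freeEdges (G : SimpleGraph V) (P : Finset V) : Finset (Sym2 V) :=
  Finset.univ.filter fun e => e ∈ G.edgeSet ∧ ¬ ∀ v ∈ e, v ∈ P

def freeWeight (G : SimpleGraph V) (AE : Fin q → Fin q → ℝ) (AV : Fin q → ℝ) (P : Finset V)
    (x : V → Fin q) : ℝ :=
  (∏ v ∈ Pᶜ, AV (x v)) * ∏ e ∈ freeEdges G P, edgeFactor AE x e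

def boundary (G : SimpleGraph V) (P : Finset V) : Finset V :=
  P.filter fun u => ∃ w ∉ P, G.Adj u w

lemma condWeight_eq_ite_mul (P : Finset V) (ρ x : V → Fin q) :
    condWeight G AE AV P ρ x = (if ∀ v ∈ P, x v = ρ v then 1 else 0) * freeWeight G AE AV P x :=
  mul_assoc _ _ _

lemma condWeight_of_not_agree {P : Finset V} {ρ x : V → Fin q} (h : ¬ ∀ v ∈ P, x v = ρ v) :
    condWeight G AE AV P ρ x = 0 := by
  rw [condWeight_eq_ite_mul, if_neg h, zero_mul]

lemma condWeight_of_agree {P : Finset V} {ρ x : V → Fin q} (h : ∀ v ∈ P, x v = ρ v) :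
    condWeight G AE AV P ρ x = freeWeight G AE AV P x := by
  rw [condWeight_eq_ite_mul, if_pos h, one_mul]

lemma freeWeight_congr {P : Finset V} {x x' : V → Fin q} (hout : ∀ u ∉ P, x u = x' u)
    (hbd : ∀ u ∈ boundary G P, x u = x' u) :
    freeWeight G AE AV P x = freeWeight G AE AV P x' := by
  unfold freeWeight
  congr 1
  · exact Finset.prod_congr rfl fun u hu => by rw [hout u (Finset.mem_compl.mp hu)]
  · refine Finset.prod_congr rfl fun e he => edgeFactor_congr fun u hu => ?_
    obtain ⟨-, heG, heP⟩ := Finset.mem_filter.mp he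
    by_cases huP : u ∈ P
    · obtain ⟨w, hwe, hwP⟩ := not_forall₂.mp heP
      have hne : u ≠ w := fun h => hwP (h ▸ huP)
      rw [(Sym2.mem_and_mem_iff hne).mp ⟨hu, hwe⟩] at heG
      exact hbd u (Finset.mem_filter.mpr ⟨huP, w, hwP, heG⟩)
    · exact hout u huP

lemma freeWeight_nonneg (hAE : ∀ i j, 0 ≤ AE i j) (hAV : ∀ i, 0 ≤ AV i) (P : Finset V)
    (x : V → Fin q) : 0 ≤ freeWeight G AE AV P x :=
  mul_nonneg (Finset.prod_nonneg fun _ _ => hAV _)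
    (Finset.prod_nonneg fun _ _ => edgeFactor_nonneg hAE x _)

lemma condDist_isDist (hAE : ∀ i j, 0 ≤ AE i j) (hAV : ∀ i, 0 ≤ AV i)
    (hperm : Permissive G AE AV) (P : Finset V) (ρ : V → Fin q) :
    IsDist (condDist G AE AV P ρ) := by
  refine ⟨fun x => div_nonneg ?_ (hperm P ρ).le, ?_⟩
  · rw [condWeight_eq_ite_mul]
    exact mul_nonneg (by split_ifs <;> norm_num) (freeWeight_nonneg hAE hAV P x)
  · simp only [condDist, ← Finset.sum_div]
    exact div_self (hperm P ρ).ne'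

lemma agree_of_condDist_ne_zero {P : Finset V} {ρ x : V → Fin q}
    (h : condDist G AE AV P ρ x ≠ 0) : ∀ v ∈ P, x v = ρ v := by
  by_contra hx
  exact h (by rw [condDist, condWeight_of_not_agree hx, zero_div])

lemma condZ_congr {P : Finset V} {ρ ρ' : V → Fin q} (h : ∀ v ∈ P, ρ v = ρ' v) :
    condZ G AE AV P ρ = condZ G AE AV P ρ' := by
  have hiff : ∀ x : V → Fin q, (∀ v ∈ P, x v = ρ v) ↔ ∀ v ∈ P, x v = ρ' v := fun x =>
    forall₂_congr fun v hv => by rw [h v hv]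
  simp only [condZ, condWeight_eq_ite_mul, hiff]

lemma freeEdges_anti {Λ P : Finset V} (hΛP : Λ ⊆ P) : freeEdges G P ⊆ freeEdges G Λ :=
  fun e he => by
    simp only [freeEdges, Finset.mem_filter] at he ⊢
    exact ⟨he.1, he.2.1, fun hΛ => he.2.2 fun v hv => hΛP (hΛ v hv)⟩

/-- `freeWeight G AE AV Λ z` is `freeWeight G AE AV P z` times a factor that only sees `z` on `P`. -/
lemma freeWeight_mul_comm {Λ P : Finset V} (hΛP : Λ ⊆ P) {x a : V → Fin q}
    (hxa : ∀ v ∈ P, x v = a v) :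
    freeWeight G AE AV Λ x * freeWeight G AE AV P a
      = freeWeight G AE AV Λ a * freeWeight G AE AV P x := by
  have hsplit : ∀ z, freeWeight G AE AV Λ z = ((∏ v ∈ Λᶜ \ Pᶜ, AV (z v))
      * ∏ e ∈ freeEdges G Λ \ freeEdges G P, edgeFactor AE z e) * freeWeight G AE AV P z :=
    fun z => by
      unfold freeWeight
      rw [← Finset.prod_sdiff (Finset.compl_subset_compl.mpr hΛP),
        ← Finset.prod_sdiff (freeEdges_anti hΛP)]
      ring
  have hinner : (∏ v ∈ Λᶜ \ Pᶜ, AV (x v)) * ∏ e ∈ freeEdges G Λ \ freeEdges G P, edgeFactor AE x e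
      = (∏ v ∈ Λᶜ \ Pᶜ, AV (a v)) * ∏ e ∈ freeEdges G Λ \ freeEdges G P, edgeFactor AE a e := by
    congr 1
    · refine Finset.prod_congr rfl fun v hv => ?_
      rw [hxa v (by simpa using (Finset.mem_sdiff.mp hv).2)]
    · refine Finset.prod_congr rfl fun e he => edgeFactor_congr fun v hv => hxa v ?_
      obtain ⟨heΛ, heP⟩ := Finset.mem_sdiff.mp he
      by_contra hvP
      exact heP (Finset.mem_filter.mpr ⟨Finset.mem_univ e, (Finset.mem_filter.mp heΛ).2.1,
        fun h => hvP (h v hv)⟩)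
  rw [hsplit x, hsplit a, hinner]
  ring

lemma condWeight_mul_condWeight_comm {Λ P : Finset V} (hΛP : Λ ⊆ P) (σ x a : V → Fin q) :
    condWeight G AE AV Λ σ x * condWeight G AE AV P x a
      = condWeight G AE AV Λ σ a * condWeight G AE AV P a x := by
  by_cases hxa : ∀ v ∈ P, x v = a v
  · have hpin : (∀ v ∈ Λ, x v = σ v) ↔ ∀ v ∈ Λ, a v = σ v :=
      forall₂_congr fun v hv => by rw [hxa v (hΛP hv)]
    rw [condWeight_of_agree fun v hv => (hxa v hv).symm, condWeight_of_agree hxa,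
      condWeight_eq_ite_mul, condWeight_eq_ite_mul, mul_assoc, mul_assoc,
      freeWeight_mul_comm hΛP hxa]
    simp only [hpin]
  · rw [condWeight_of_not_agree fun h => hxa fun v hv => (h v hv).symm,
      condWeight_of_not_agree hxa, mul_zero, mul_zero]

/-- The tower property: resampling a sample of `μ^σ_Λ` off `P ⊇ Λ` leaves its law unchanged. -/
lemma sum_condDist_mul_condDist {Λ P : Finset V} (hΛP : Λ ⊆ P) (σ a : V → Fin q)
    (ha : IsDist (condDist G AE AV P a)) :
    ∑ x, condDist G AE AV Λ σ x * condDist G AE AV P x a = condDist G AE AV Λ σ a := by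
  have hswap : ∀ x, condDist G AE AV Λ σ x * condDist G AE AV P x a
      = condDist G AE AV Λ σ a * condDist G AE AV P a x := fun x => by
    by_cases hxa : ∀ v ∈ P, x v = a v
    · simp only [condDist, div_mul_div_comm, condWeight_mul_condWeight_comm hΛP σ x a,
        condZ_congr hxa]
    · simp only [condDist, condWeight_of_not_agree hxa, zero_div, mul_zero,
        condWeight_of_not_agree fun h => hxa fun v hv => (h v hv).symm]
  rw [Finset.sum_congr rfl fun x _ => hswap x, ← Finset.mul_sum, ha.2, mul_one]

lemma condWeight_pinSwap {P : Finset V} {ρ ρ' : V → Fin q}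
    (hbd : ∀ u ∈ boundary G P, ρ u = ρ' u) (x : V → Fin q) :
    condWeight G AE AV P ρ' (pinSwap P ρ ρ' x) = condWeight G AE AV P ρ x := by
  have hpin : (∀ v ∈ P, pinSwap P ρ ρ' x v = ρ' v) ↔ ∀ v ∈ P, x v = ρ v :=
    forall₂_congr fun v hv => by
      rw [pinSwap_apply_of_mem hv, Equiv.swap_apply_eq_iff, Equiv.swap_apply_right]
  by_cases hx : ∀ v ∈ P, x v = ρ v
  · rw [condWeight_of_agree (hpin.mpr hx), condWeight_of_agree hx]
    refine freeWeight_congr (fun u hu => pinSwap_apply_of_notMem hu ρ ρ' x) fun u hu => ?_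
    exact pinSwap_apply_of_eq (fun _ => hbd u hu) x
  · rw [condWeight_of_not_agree (hpin.not.mpr hx), condWeight_of_not_agree hx]

lemma condDist_pinSwap {P : Finset V} {ρ ρ' : V → Fin q}
    (hbd : ∀ u ∈ boundary G P, ρ u = ρ' u) (x : V → Fin q) :
    condDist G AE AV P ρ' (pinSwap P ρ ρ' x) = condDist G AE AV P ρ x := by
  have hZ : condZ G AE AV P ρ' = condZ G AE AV P ρ := by
    rw [condZ, ← (pinSwap P ρ ρ').sum_comp]
    exact Finset.sum_congr rfl fun x _ => condWeight_pinSwap hbd x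
  rw [condDist, condWeight_pinSwap hbd, hZ]
  rfl

/-- Couple along `pinSwap`, which only moves values at vertices of `P` where the pinnings differ. -/
lemma exists_coupling_disagreeOn_eq_zero {P U : Finset V} {ρ ρ' : V → Fin q}
    (hρ : IsDist (condDist G AE AV P ρ)) (hbd : ∀ u ∈ boundary G P, ρ u = ρ' u)
    (hU : ∀ u ∈ U, u ∈ P → ρ u = ρ' u) :
    ∃ κ, IsCoupling κ (condDist G AE AV P ρ) (condDist G AE AV P ρ') ∧
      expectedCost (disagreeOn U) κ = 0 := by
  refine ⟨_, isCoupling_graphCoupling (pinSwap P ρ ρ') hρ.1 (condDist_pinSwap hbd), ?_⟩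
  refine (expectedCost_graphCoupling _ _ _).trans (Finset.sum_eq_zero fun z _ => ?_)
  exact mul_eq_zero_of_right _ (disagreeOn_eq_zero fun u hu =>
    (pinSwap_apply_of_eq (hU u hu) z).symm)

end Gibbs

section CouplingIndependence

variable {V : Type} [Fintype V] [DecidableEq V] {q : ℕ}
  {G : SimpleGraph V} {AE : Fin q → Fin q → ℝ} {AV : Fin q → ℝ} {C ε : ℝ}

/-- Any coupling of two pinnings that differ at `u` disagrees at `u` almost surely. -/
lemma expectedCost_disagreeOn_add_one_le {P U : Finset V} {ρ ρ' : V → Fin q} {u : V}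
    (hρ : IsDist (condDist G AE AV P ρ)) {κ : (V → Fin q) × (V → Fin q) → ℝ}
    (hκ : IsCoupling κ (condDist G AE AV P ρ) (condDist G AE AV P ρ')) (hu : u ∈ P)
    (hρu : ρ u ≠ ρ' u) (huU : u ∉ U) :
    expectedCost (disagreeOn U) κ + 1 ≤ expectedCost hamming κ := by
  calc expectedCost (disagreeOn U) κ + 1 = ∑ p, κ p * (disagreeOn U p.1 p.2 + 1) := by
        simp only [expectedCost, mul_add, mul_one, Finset.sum_add_distrib, hκ.sum_eq, hρ.2]
    _ ≤ expectedCost hamming κ := Finset.sum_le_sum fun p _ => ?_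
  by_cases hp : κ p = 0
  · simp [hp]
  refine mul_le_mul_of_nonneg_left ?_ (hκ.1 p)
  have hdis : p.1 u ≠ p.2 u := by
    rwa [agree_of_condDist_ne_zero (hκ.left_ne_zero hp) u hu,
      agree_of_condDist_ne_zero (hκ.right_ne_zero hp) u hu]
  rw [← disagreeOn_insert huU hdis, ← disagreeOn_univ]
  exact disagreeOn_mono (Finset.subset_univ _) _ _

lemma one_le_of_couplingIndependence (hdist : ∀ Λ σ, IsDist (condDist G AE AV Λ σ))
    (hCI : CouplingIndependence G AE AV C) {Λ : Finset V} {σ τ : V → Fin q} {v : V}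
    (hd : DifferOnlyAt Λ σ τ v) : 1 ≤ C := by
  refine (le_wass (hdist Λ σ) (hdist Λ τ) fun κ hκ => ?_).trans (hCI Λ σ τ v hd)
  have h := expectedCost_disagreeOn_add_one_le (U := ∅) (hdist Λ σ) hκ hd.1 hd.2.1
    (Finset.notMem_empty v)
  linarith [expectedCost_nonneg hκ.1 (disagreeOn_nonneg (∅ : Finset V))]

lemma exists_coupling_disagreeOn_lt (hdist : ∀ Λ σ, IsDist (condDist G AE AV Λ σ))
    (hCI : CouplingIndependence G AE AV C) (hε : C - 1 < ε) {P U : Finset V}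
    {ρ ρ' : V → Fin q} {u : V} (hd : DifferOnlyAt P ρ ρ' u) (huU : u ∉ U) :
    ∃ κ, IsCoupling κ (condDist G AE AV P ρ) (condDist G AE AV P ρ') ∧
      expectedCost (disagreeOn U) κ < ε := by
  obtain ⟨κ, hκ, hlt⟩ := exists_expectedCost_lt_of_wass_lt (hdist P ρ) (hdist P ρ')
    ((hCI P ρ ρ' u hd).trans_lt (lt_add_of_sub_right_lt hε))
  have h := expectedCost_disagreeOn_add_one_le (hdist P ρ) hκ hd.1 hd.2.1 huU
  exact ⟨κ, hκ, by linarith⟩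

/-- Flip the disagreements in `F` one vertex at a time. -/
lemma exists_coupling_piecewise (hdist : ∀ Λ σ, IsDist (condDist G AE AV Λ σ))
    (hCI : CouplingIndependence G AE AV C) (hε : C - 1 < ε) {P U : Finset V}
    {x y : V → Fin q} {F : Finset V} (hF : ∀ w ∈ F, w ∈ P ∧ w ∉ U ∧ x w ≠ y w) :
    ∃ κ, IsCoupling κ (condDist G AE AV P x) (condDist G AE AV P (F.piecewise y x)) ∧
      expectedCost (disagreeOn U) κ ≤ ε * F.card := by
  induction F using Finset.induction_on with
  | empty =>
    refine ⟨graphCoupling (Equiv.refl _) (condDist G AE AV P x), ?_, ?_⟩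
    · rw [Finset.piecewise_empty]
      exact isCoupling_graphCoupling _ (hdist P x).1 fun _ => rfl
    · simp [expectedCost_graphCoupling, disagreeOn_eq_zero]
  | insert w F hw ih =>
    obtain ⟨κ₁, hκ₁, hc₁⟩ := ih fun a ha => hF a (Finset.mem_insert_of_mem ha)
    obtain ⟨hwP, hwU, hxy⟩ := hF w (Finset.mem_insert_self w F)
    have hd : DifferOnlyAt P (F.piecewise y x) ((insert w F).piecewise y x) w := by
      refine ⟨hwP, ?_, fun a _ haw => (Finset.piecewise_insert_of_ne _ _ _ haw).symm⟩
      rwa [Finset.piecewise_eq_of_notMem _ _ _ hw,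
        Finset.piecewise_eq_of_mem _ _ _ (Finset.mem_insert_self w F)]
    obtain ⟨κ₂, hκ₂, hc₂⟩ := exists_coupling_disagreeOn_lt hdist hCI hε hd hwU
    obtain ⟨κ, hκ, hc⟩ := hκ₁.glue hκ₂ (disagreeOn_triangle U)
    refine ⟨κ, hκ, hc.trans ?_⟩
    rw [Finset.card_insert_of_notMem hw, Nat.cast_succ, mul_add_one]
    linarith

/-- Flip the boundary disagreements one at a time, then couple with `y` along `pinSwap`. -/
lemma exists_coupling_disagreeOn_le_boundary (hdist : ∀ Λ σ, IsDist (condDist G AE AV Λ σ))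
    (hCI : CouplingIndependence G AE AV C) (hε : C - 1 < ε) {P U : Finset V}
    {x y : V → Fin q} (hU : ∀ u ∈ U, u ∈ P → x u = y u) :
    ∃ κ, IsCoupling κ (condDist G AE AV P x) (condDist G AE AV P y) ∧
      expectedCost (disagreeOn U) κ ≤ ε * disagreeOn (boundary G P) x y := by
  set F := (boundary G P).filter fun u => x u ≠ y u
  have hF : ∀ w ∈ F, w ∈ P ∧ w ∉ U ∧ x w ≠ y w := fun w hw => by
    obtain ⟨hwB, hxy⟩ := Finset.mem_filter.mp hw
    have hwP := (Finset.mem_filter.mp hwB).1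
    exact ⟨hwP, fun hwU => hxy (hU w hwU hwP), hxy⟩
  obtain ⟨κ₁, hκ₁, hc₁⟩ := exists_coupling_piecewise hdist hCI hε hF
  have hbd : ∀ u ∈ boundary G P, F.piecewise y x u = y u := fun u hu => by
    by_cases huF : u ∈ F
    · exact Finset.piecewise_eq_of_mem _ _ _ huF
    · rw [Finset.piecewise_eq_of_notMem _ _ _ huF]
      exact not_not.mp fun h => huF (Finset.mem_filter.mpr ⟨hu, h⟩)
  obtain ⟨κ₂, hκ₂, hc₂⟩ := exists_coupling_disagreeOn_eq_zero (hdist P (F.piecewise y x)) hbd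
    fun u hu huP => by
      rw [Finset.piecewise_eq_of_notMem _ _ _ fun huF => (hF u huF).2.1 hu]
      exact hU u hu huP
  obtain ⟨κ, hκ, hc⟩ := hκ₁.glue hκ₂ (disagreeOn_triangle U)
  have hcard : disagreeOn (boundary G P) x y = F.card := rfl
  exact ⟨κ, hκ, by rw [hcard]; linarith⟩

end CouplingIndependence

section Geometry

variable {V : Type} [Fintype V] {G : SimpleGraph V} {v u : V}

/-- Defined through `edist`, so vertices not reachable from `v` lie outside every ball. -/
def closedBall (G : SimpleGraph V) (v : V) (r : ℕ) : Finset V :=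
  Finset.univ.filter fun u => G.edist v u ≤ r

lemma mem_closedBall {r : ℕ} : u ∈ closedBall G v r ↔ G.edist v u ≤ r := by
  simp [closedBall]

lemma closedBall_mono {r r' : ℕ} (h : r ≤ r') : closedBall G v r ⊆ closedBall G v r' :=
  fun _ hu => mem_closedBall.mpr ((mem_closedBall.mp hu).trans (by exact_mod_cast h))

variable [DecidableEq V]

lemma mem_sphere {r : ℕ} : u ∈ sphere G v r ↔ G.edist v u = r := by
  simp only [sphere, Finset.mem_filter, Finset.mem_univ, true_and]
  refine ⟨fun ⟨h, hr⟩ => hr ▸ h.coe_dist_eq_edist.symm, fun h => ?_⟩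
  have hvu : G.Reachable v u :=
    SimpleGraph.edist_ne_top_iff_reachable.mp (h ▸ ENat.natCast_ne_top r)
  exact ⟨hvu, by exact_mod_cast hvu.coe_dist_eq_edist.trans h⟩

lemma sphere_subset_compl_closedBall {r R : ℕ} (h : r < R) :
    sphere G v R ⊆ (closedBall G v r)ᶜ := fun u hu => by
  rw [Finset.mem_compl, mem_closedBall, mem_sphere.mp hu, not_le]
  exact_mod_cast h

lemma pairwiseDisjoint_sphere (I : Set ℕ) : I.PairwiseDisjoint (sphere G v) :=
  fun _ _ _ _ hrs => Finset.disjoint_left.mpr fun _ hr hs =>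
    hrs (by exact_mod_cast (mem_sphere.mp hr).symm.trans (mem_sphere.mp hs))

lemma boundary_union_closedBall_subset (Λ : Finset V) (r : ℕ) :
    boundary G (Λ ∪ closedBall G v r) ⊆ (Λ \ closedBall G v r) ∪ sphere G v r := by
  intro u hu
  obtain ⟨huP, w, hwP, huw⟩ := Finset.mem_filter.mp hu
  by_cases hub : u ∈ closedBall G v r
  · refine Finset.mem_union_right _ (mem_sphere.mpr ?_)
    have hu_le := mem_closedBall.mp hub
    have hw_gt : (r : ℕ∞) < G.edist v w :=
      not_le.mp fun h => hwP (Finset.mem_union_right _ (mem_closedBall.mpr h))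
    have htri : G.edist v w ≤ G.edist v u + 1 :=
      (G.edist_triangle).trans_eq (by rw [SimpleGraph.edist_eq_one_iff_adj.mpr huw])
    obtain ⟨n, hn⟩ := ENat.ne_top_iff_exists.mp (ne_top_of_le_ne_top (ENat.natCast_ne_top r) hu_le)
    rw [← hn] at hu_le htri ⊢
    have := hw_gt.trans_le htri
    norm_cast at hu_le this ⊢
    omega
  · exact Finset.mem_union_left _ (Finset.mem_sdiff.mpr
      ⟨(Finset.mem_union.mp huP).resolve_right hub, hub⟩)

lemma exists_sphere_expectedCost_le {α : Type} [Fintype α] [DecidableEq α]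
    {π : (V → α) × (V → α) → ℝ} (hπ : ∀ p, 0 ≤ π p) (v : V) (m : ℕ) {s : ℕ} (hs : 0 < s) :
    ∃ r, m < r ∧ r ≤ m + s ∧ expectedCost (disagreeOn (sphere G v r)) π
      ≤ expectedCost (disagreeOn (closedBall G v m)ᶜ) π / s := by
  have hsum : ∑ r ∈ Finset.Ioc m (m + s), expectedCost (disagreeOn (sphere G v r)) π
      ≤ expectedCost (disagreeOn (closedBall G v m)ᶜ) π :=
    calc _ = expectedCost (fun x y => ∑ r ∈ Finset.Ioc m (m + s), disagreeOn (sphere G v r) x y)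
          π := by
          simp only [expectedCost, Finset.mul_sum]
          exact Finset.sum_comm
      _ ≤ _ := expectedCost_mono hπ fun x y => sum_disagreeOn_le (pairwiseDisjoint_sphere _)
          (fun r hr => sphere_subset_compl_closedBall (Finset.mem_Ioc.mp hr).1) x y
  have hconst : ∑ _r ∈ Finset.Ioc m (m + s), expectedCost (disagreeOn (closedBall G v m)ᶜ) π / s
      = expectedCost (disagreeOn (closedBall G v m)ᶜ) π := by
    rw [Finset.sum_const, Nat.card_Ioc, Nat.add_sub_cancel_left, nsmul_eq_mul,
      mul_div_cancel₀ _ (by exact_mod_cast hs.ne')]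
  obtain ⟨r, hr, hle⟩ := Finset.exists_le_of_sum_le (Finset.nonempty_Ioc.mpr (by omega))
    (hsum.trans_eq hconst.symm)
  exact ⟨r, (Finset.mem_Ioc.mp hr).1, (Finset.mem_Ioc.mp hr).2, hle⟩

end Geometry

section Decay

variable {V : Type} [Fintype V] [DecidableEq V] {q : ℕ}
  {G : SimpleGraph V} {AE : Fin q → Fin q → ℝ} {AV : Fin q → ℝ} {C ε : ℝ}
  {Λ : Finset V} {σ τ : V → Fin q} {v : V}

lemma exists_coupling_union_closedBall (hdist : ∀ Λ σ, IsDist (condDist G AE AV Λ σ))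
    (hCI : CouplingIndependence G AE AV C) (hε : C - 1 < ε) (hε0 : 0 ≤ ε) {r : ℕ}
    {x y : V → Fin q} (hxy : ∀ u ∈ Λ, u ∉ closedBall G v r → x u = y u) :
    ∃ κ, IsCoupling κ (condDist G AE AV (Λ ∪ closedBall G v r) x)
        (condDist G AE AV (Λ ∪ closedBall G v r) y) ∧
      expectedCost (disagreeOn (closedBall G v r)ᶜ) κ ≤ ε * disagreeOn (sphere G v r) x y := by
  obtain ⟨κ, hκ, hc⟩ := exists_coupling_disagreeOn_le_boundary hdist hCI hε
    (U := (closedBall G v r)ᶜ) fun u hu huP =>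
      hxy u ((Finset.mem_union.mp huP).resolve_right (Finset.mem_compl.mp hu))
        (Finset.mem_compl.mp hu)
  refine ⟨κ, hκ, hc.trans (mul_le_mul_of_nonneg_left ?_ hε0)⟩
  refine disagreeOn_le_disagreeOn fun u hu hne => ?_
  rcases Finset.mem_union.mp (boundary_union_closedBall_subset Λ r hu) with h | h
  · exact absurd (hxy u (Finset.mem_sdiff.mp h).1 (Finset.mem_sdiff.mp h).2) hne
  · exact h

/-- Pin every sample of `π` on `Λ ∪ closedBall G v r` and recouple the rest: only disagreements
on the sphere of radius `r` can propagate beyond the ball, each costing at most `ε`. -/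
lemma exists_coupling_compl_closedBall_le (hdist : ∀ Λ σ, IsDist (condDist G AE AV Λ σ))
    (hCI : CouplingIndependence G AE AV C) (hε : C - 1 < ε) (hd : DifferOnlyAt Λ σ τ v)
    {π : (V → Fin q) × (V → Fin q) → ℝ}
    (hπ : IsCoupling π (condDist G AE AV Λ σ) (condDist G AE AV Λ τ)) (r : ℕ) :
    ∃ π', IsCoupling π' (condDist G AE AV Λ σ) (condDist G AE AV Λ τ) ∧
      expectedCost (disagreeOn (closedBall G v r)ᶜ) π'
        ≤ ε * expectedCost (disagreeOn (sphere G v r)) π := by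
  have hε0 : 0 ≤ ε := by linarith [one_le_of_couplingIndependence hdist hCI hd]
  set P := Λ ∪ closedBall G v r
  have hκ : ∀ p : (V → Fin q) × (V → Fin q), ∃ κ,
      IsCoupling κ (condDist G AE AV P p.1) (condDist G AE AV P p.2) ∧
      (π p ≠ 0 → expectedCost (disagreeOn (closedBall G v r)ᶜ) κ
        ≤ ε * disagreeOn (sphere G v r) p.1 p.2) := by
    intro p
    by_cases hp : π p = 0
    · exact ⟨_, isCoupling_mul (hdist P p.1) (hdist P p.2), absurd hp⟩
    have hx := agree_of_condDist_ne_zero (hπ.left_ne_zero hp)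
    have hy := agree_of_condDist_ne_zero (hπ.right_ne_zero hp)
    have hxy : ∀ u ∈ Λ, u ∉ closedBall G v r → p.1 u = p.2 u := fun u hu hub => by
      rw [hx u hu, hy u hu]
      exact hd.2.2 u hu fun h => hub (h ▸ mem_closedBall.mpr (by simp))
    obtain ⟨κ, hκ, hc⟩ := exists_coupling_union_closedBall hdist hCI hε hε0 hxy
    exact ⟨κ, hκ, fun _ => hc⟩
  choose κ hκ hκc using hκ
  have hresample : ∀ ρ, (fun x => ∑ a, condDist G AE AV Λ ρ a * condDist G AE AV P a x)
      = condDist G AE AV Λ ρ := fun ρ => funext fun x =>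
    sum_condDist_mul_condDist Finset.subset_union_left ρ x (hdist P x)
  refine ⟨_, hresample σ ▸ hresample τ ▸ hπ.bind hκ, (expectedCost_bind _ π κ).trans_le ?_⟩
  calc ∑ p, π p * expectedCost (disagreeOn (closedBall G v r)ᶜ) (κ p)
      ≤ ∑ p, π p * (ε * disagreeOn (sphere G v r) p.1 p.2) := by
        refine Finset.sum_le_sum fun p _ => ?_
        by_cases hp : π p = 0
        · simp [hp]
        · exact mul_le_mul_of_nonneg_left (hκc p hp) (hπ.1 p)
    _ = ε * expectedCost (disagreeOn (sphere G v r)) π := by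
        simp only [expectedCost, Finset.mul_sum]
        exact Finset.sum_congr rfl fun p _ => by ring

lemma exists_coupling_compl_closedBall_le_pow (hdist : ∀ Λ σ, IsDist (condDist G AE AV Λ σ))
    (hCI : CouplingIndependence G AE AV C) (hε : C - 1 < ε) (hd : DifferOnlyAt Λ σ τ v)
    {s : ℕ} (hs : 0 < s) (n : ℕ) :
    ∃ π, IsCoupling π (condDist G AE AV Λ σ) (condDist G AE AV Λ τ) ∧
      expectedCost (disagreeOn (closedBall G v (n * s))ᶜ) π ≤ ε * (ε / s) ^ n := by
  have hε0 : 0 ≤ ε := by linarith [one_le_of_couplingIndependence hdist hCI hd]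
  induction n with
  | zero =>
    obtain ⟨κ, hκ, hc⟩ := exists_coupling_disagreeOn_lt hdist hCI hε hd
      (U := (closedBall G v (0 * s))ᶜ) (by simp [mem_closedBall])
    exact ⟨κ, hκ, by simpa using hc.le⟩
  | succ n ih =>
    obtain ⟨π, hπ, hc⟩ := ih
    obtain ⟨r, -, hrs, hr⟩ := exists_sphere_expectedCost_le hπ.1 v (n * s) hs
    obtain ⟨π', hπ', hc'⟩ := exists_coupling_compl_closedBall_le hdist hCI hε hd hπ r
    refine ⟨π', hπ', ?_⟩
    calc expectedCost (disagreeOn (closedBall G v ((n + 1) * s))ᶜ) π'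
        ≤ expectedCost (disagreeOn (closedBall G v r)ᶜ) π' :=
          expectedCost_mono hπ'.1 (disagreeOn_mono (Finset.compl_subset_compl.mpr
            (closedBall_mono (by rw [add_one_mul]; exact hrs))))
      _ ≤ ε * (ε * (ε / s) ^ n / s) := hc'.trans (mul_le_mul_of_nonneg_left
          (hr.trans (div_le_div_of_nonneg_right hc (Nat.cast_nonneg s))) hε0)
      _ = ε * (ε / s) ^ (n + 1) := by ring

end Decay

lemma exists_nat_add_one_eq_ceil {x : ℝ} (hx : 0 < x) :
    ∃ N : ℕ, (N : ℤ) + 1 = ⌈x⌉ ∧ (N : ℝ) < x := by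
  have hk : 0 < ⌈x⌉ := Int.ceil_pos.mpr hx
  refine ⟨(⌈x⌉ - 1).toNat, by omega, ?_⟩
  have h := Int.ceil_lt_add_one x
  rw [← Int.cast_natCast, Int.toNat_of_nonneg (by omega), Int.cast_sub, Int.cast_one]
  linarith

end SpinFormal

theorem sphere_coupling_of_coupling_independence_general
    {V : Type} [Fintype V] [DecidableEq V] {q : ℕ}
    (G : SimpleGraph V) (AE : Fin q → Fin q → ℝ) (AV : Fin q → ℝ)
    (hAEnn : ∀ i j, 0 ≤ AE i j) (hAVnn : ∀ i, 0 ≤ AV i)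
    (hperm : Permissive G AE AV)
    (C : ℝ) (hCI : CouplingIndependence G AE AV C)
    (R : ℕ) (hR : 0 < R)
    (Λ : Finset V) (σ τ : V → Fin q) (v : V) (hdiff : DifferOnlyAt Λ σ τ v) :
    ∃ π : ((V → Fin q) × (V → Fin q)) → ℝ,
      IsCoupling π (condDist G AE AV Λ σ) (condDist G AE AV Λ τ) ∧
      ∑ p : (V → Fin q) × (V → Fin q),
          π p * (((sphere G v R).filter fun u => p.1 u ≠ p.2 u).card : ℝ)
        ≤ 2 * C * ((1 : ℝ) / 2) ^ (⌈(R : ℝ) / (2 * C)⌉ : ℤ) := by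
  have hdist := condDist_isDist hAEnn hAVnn hperm
  have hC := one_le_of_couplingIndependence hdist hCI hdiff
  set s := ⌊2 * C⌋₊
  have hs : 0 < s := Nat.floor_pos.mpr (by linarith)
  have hs2C : (s : ℝ) ≤ 2 * C := Nat.floor_le (by linarith)
  obtain ⟨N, hN, hNR⟩ := exists_nat_add_one_eq_ceil (x := R / (2 * C)) (by positivity)
  have hNs : N * s < R := by
    have : (N : ℝ) * s < R := by
      calc (N : ℝ) * s ≤ N * (2 * C) := by gcongr
        _ < R := by rwa [← lt_div_iff₀ (by positivity)]
    exact_mod_cast this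
  obtain ⟨π, hπ, hc⟩ := exists_coupling_compl_closedBall_le_pow hdist hCI (ε := s / 2)
    (by linarith [Nat.lt_floor_add_one (2 * C)]) hdiff hs N
  refine ⟨π, hπ, ?_⟩
  calc expectedCost (disagreeOn (sphere G v R)) π
      ≤ expectedCost (disagreeOn (closedBall G v (N * s))ᶜ) π :=
        expectedCost_mono hπ.1 (disagreeOn_mono (sphere_subset_compl_closedBall hNs))
    _ ≤ s / 2 * ((s : ℝ) / 2 / s) ^ N := hc
    _ ≤ 2 * C * ((1 : ℝ) / 2) ^ (⌈(R : ℝ) / (2 * C)⌉ : ℤ) := by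
        rw [← hN, zpow_add_one₀ (by norm_num), zpow_natCast, div_div_cancel_left' (by positivity),
          one_div, mul_comm _ (2⁻¹ : ℝ), ← mul_assoc]
        gcongr
        linarith

/-- coupling independence implies a small-disagreement coupling on the
sphere of radius `R`. -/
theorem sphere_coupling_of_coupling_independence
    {V : Type} [Fintype V] [DecidableEq V] {q : ℕ}
    (G : SimpleGraph V) (AE : Fin q → Fin q → ℝ) (AV : Fin q → ℝ)
    (hq : 2 ≤ q)
    (hAEsymm : ∀ i j, AE i j = AE j i)
    (hAEnn : ∀ i j, 0 ≤ AE i j) (hAVnn : ∀ i, 0 ≤ AV i)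
    (hperm : Permissive G AE AV)
    (C : ℝ) (hC : 0 < C) (hCI : CouplingIndependence G AE AV C)
    (R : ℕ) (hR : 0 < R)
    (Λ : Finset V) (σ τ : V → Fin q) (v : V) (hdiff : DifferOnlyAt Λ σ τ v) :
    ∃ π : ((V → Fin q) × (V → Fin q)) → ℝ,
      IsCoupling π (condDist G AE AV Λ σ) (condDist G AE AV Λ τ) ∧
      ∑ p : (V → Fin q) × (V → Fin q),
          π p * (((sphere G v R).filter fun u => p.1 u ≠ p.2 u).card : ℝ)
        ≤ 2 * C * ((1 : ℝ) / 2) ^ (⌈(R : ℝ) / (2 * C)⌉ : ℤ) :=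
  sphere_coupling_of_coupling_independence_general G AE AV hAEnn hAVnn hperm C hCI R hR Λ σ τ v
    hdiff
end
end

section
/- Let G be a finite simple graph of maximum degree at most Δ, where Δ ≥ 2, let v be a vertex of G, let V' ⊆ V(G)∖{v} be nonempty with n = |V'|, and let G' = G[V'] be the induced subgraph. Let L and L' be colour lists L_u, L'_u ⊆ [q] for u ∈ V' such that L_u ⊆ L'_u for all u ∈ V' and L_u = L'_u for every u ∈ V' that is not a neighbour of v in G. Fix flip parameters (p_ℓ)_{ℓ≥1} with p_ℓ ∈ [0,1] for all ℓ and p_ℓ = 0 for all ℓ > 6, and let P and Q be the flip dynamics with these parameters for the instances (G',L) and (G',L') respectively. Then for every proper list colouring X of (G',L), W(P(X),Q(X)) ≤ 12Δ⁷/n, where W is the Wasserstein distance with respect to Hamming distance. -/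
open scoped Classical BigOperators

noncomputable section

namespace SpinFormal

variable {V : Type} [Fintype V] [DecidableEq V] {q : ℕ}

/-- The two-colour (Kempe) graph for colours `a, c`: edges of `G` whose endpoints are
coloured `a` and `c` (in some order) under `X`. -/
def kempeGraph (G : SimpleGraph V) (X : V → Fin q) (a c : Fin q) : SimpleGraph V where
  Adj x y := G.Adj x y ∧ ((X x = a ∧ X y = c) ∨ (X x = c ∧ X y = a))
  symm := by
    constructor
    intro x y h
    exact ⟨h.1.symm, h.2.elim (fun h2 => Or.inr ⟨h2.2, h2.1⟩) (fun h2 => Or.inl ⟨h2.2, h2.1⟩)⟩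
  loopless := ⟨fun x h => G.irrefl h.1⟩

/-- The Kempe component `S_X(v,c)`: vertices reachable from `v` by an
`(X(v),c)`-alternating path; empty when `c = X(v)`. -/
noncomputable def kempeComponent (G : SimpleGraph V) (X : V → Fin q) (v : V) (c : Fin q) :
    Finset V :=
  if c = X v then ∅
  else Finset.univ.filter fun u => (kempeGraph G X (X v) c).Reachable v u

/-- Exchange the colours `a` and `c` on the set `S`. -/
def flipCol (X : V → Fin q) (S : Finset V) (a c : Fin q) : V → Fin q :=
  fun u => if u ∈ S then (if X u = a then c else if X u = c then a else X u) else X u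

/-- One step of the flip dynamics with flip parameters `p` for the list-colouring
instance `(G, L)`, started from `X`: the distribution of the next state. -/
noncomputable def flipStep (G : SimpleGraph V) (L : V → Finset (Fin q)) (p : ℕ → ℝ)
    (X : V → Fin q) : (V → Fin q) → ℝ := fun Y =>
  (1 / ((Fintype.card V : ℝ) * q)) * ∑ v : V, ∑ c : Fin q,
    (if (kempeComponent G X v c).card ≠ 0 ∧
        ∀ u ∈ kempeComponent G X v c,
          flipCol X (kempeComponent G X v c) (X v) c u ∈ L u then
      (p (kempeComponent G X v c).card / ((kempeComponent G X v c).card : ℝ)) *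
          (if Y = flipCol X (kempeComponent G X v c) (X v) c then 1 else 0) +
        (1 - p (kempeComponent G X v c).card / ((kempeComponent G X v c).card : ℝ)) *
          (if Y = X then 1 else 0)
    else (if Y = X then 1 else 0))

/-- `X` is a proper list colouring of the instance `(G, L)`. -/
def ProperListCol (G : SimpleGraph V) (L : V → Finset (Fin q)) (X : V → Fin q) : Prop :=
  (∀ v : V, X v ∈ L v) ∧ ∀ u v : V, G.Adj u v → X u ≠ X v

end SpinFormal

open SpinFormal

/-!
Couple the two steps move by move. After the same vertex `w` and colour `c` are drawn, if
flipping `S = S_X(w,c)` is allowed for `L` it is also allowed for `L'` (as `L ⊆ L'`), with the same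
probability, and the two chains move together; otherwise the `L`-chain stays at `X` and is
coupled independently with the `L'`-chain. A disagreement thus needs a flip allowed for `L'`
but not for `L`, i.e. some `u ∈ S` with `L u ≠ L' u`, hence `u ∼ v`. As `p_ℓ = 0` for `ℓ > 6`,
only `|S| ≤ 6` matters; then `w` is joined to `u` inside `S` by a walk of length at most 5, so
`w` is the end of a walk of length between 1 and 6 from `v`, and there are at most `6Δ⁶` such
vertices. Each of them is drawn with probability `1/n` and then moves at most `|S|` vertices with
probability `p_{|S|}/|S| ≤ 1/|S|`.
-/

namespace SpinFormal

section Coupling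

variable {Ω₁ Ω₂ : Type} [Fintype Ω₁] [Fintype Ω₂]

theorem wass_le_of_isCoupling {d : Ω₁ → Ω₂ → ℝ} (hd : ∀ x y, 0 ≤ d x y)
    {μ : Ω₁ → ℝ} {ν : Ω₂ → ℝ} {π : Ω₁ × Ω₂ → ℝ} (hπ : IsCoupling π μ ν) :
    Wass d μ ν ≤ ∑ P, π P * d P.1 P.2 := by
  refine csInf_le ⟨0, ?_⟩ ⟨π, hπ, rfl⟩
  rintro _ ⟨ρ, hρ, rfl⟩
  exact Finset.sum_nonneg fun P _ => mul_nonneg (hρ.1 P) (hd _ _)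

theorem IsCoupling.const_mul_sum {ι : Type} [Fintype ι] {C : ℝ} (hC : 0 ≤ C)
    {π : ι → Ω₁ × Ω₂ → ℝ} {μ : ι → Ω₁ → ℝ} {ν : ι → Ω₂ → ℝ}
    (hπ : ∀ i, IsCoupling (π i) (μ i) (ν i)) :
    IsCoupling (fun P => C * ∑ i, π i P) (fun x => C * ∑ i, μ i x)
      (fun y => C * ∑ i, ν i y) := by
  refine ⟨fun P => mul_nonneg hC (Finset.sum_nonneg fun i _ => (hπ i).1 P), fun x => ?_,
    fun y => ?_⟩
  · rw [← Finset.mul_sum, Finset.sum_comm]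
    simp only [(hπ _).2.1]
  · rw [← Finset.mul_sum, Finset.sum_comm]
    simp only [(hπ _).2.2]

theorem wass_const_mul_sum_le {ι : Type} [Fintype ι] {d : Ω₁ → Ω₂ → ℝ}
    (hd : ∀ x y, 0 ≤ d x y) {C : ℝ} (hC : 0 ≤ C)
    {π : ι → Ω₁ × Ω₂ → ℝ} {μ : ι → Ω₁ → ℝ} {ν : ι → Ω₂ → ℝ}
    (hπ : ∀ i, IsCoupling (π i) (μ i) (ν i)) :
    Wass d (fun x => C * ∑ i, μ i x) (fun y => C * ∑ i, ν i y)
      ≤ C * ∑ i, ∑ P, π i P * d P.1 P.2 := by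
  refine (wass_le_of_isCoupling hd (IsCoupling.const_mul_sum hC hπ)).trans_eq ?_
  simp only [Finset.sum_mul, Finset.mul_sum, mul_assoc]
  exact Finset.sum_comm

theorem isCoupling_prod {μ : Ω₁ → ℝ} {ν : Ω₂ → ℝ} (hμ : IsDist μ) (hν : IsDist ν) :
    IsCoupling (fun P => μ P.1 * ν P.2) μ ν :=
  ⟨fun P => mul_nonneg (hμ.1 _) (hν.1 _),
    fun x => by simp only; rw [← Finset.mul_sum, hν.2, mul_one],
    fun y => by simp only; rw [← Finset.sum_mul, hμ.2, one_mul]⟩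

theorem isCoupling_diag {Ω : Type} [Fintype Ω] [DecidableEq Ω] {μ : Ω → ℝ} (hμ : ∀ x, 0 ≤ μ x) :
    IsCoupling (fun P => if P.1 = P.2 then μ P.1 else 0) μ μ :=
  ⟨fun P => by dsimp only; split_ifs <;> simp [hμ], fun x => by simp, fun y => by simp⟩

end Coupling

theorem hamming_nonneg {W α : Type} [Fintype W] [DecidableEq α] (σ τ : W → α) :
    0 ≤ hamming σ τ := Nat.cast_nonneg _

theorem hamming_self {W α : Type} [Fintype W] [DecidableEq α] (σ : W → α) :
    hamming σ σ = 0 := by simp [hamming]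

theorem one_div_card_mul_sum_mem_le {V : Type} [DecidableEq V] (V' s : Finset V) (q : ℕ) :
    1 / ((Fintype.card V' : ℝ) * q) * ∑ m : V' × Fin q, (if (m.1 : V) ∈ s then (1 : ℝ) else 0)
      ≤ s.card / V'.card := by
  have hcount : ((Finset.univ.filter fun w : V' => (w : V) ∈ s).card : ℝ) ≤ s.card :=
    Nat.cast_le.mpr (Finset.card_le_card_of_injOn Subtype.val
      (fun w hw => (Finset.mem_filter.mp hw).2) Subtype.val_injective.injOn)
  have hsum : ∑ m : V' × Fin q, (if (m.1 : V) ∈ s then (1 : ℝ) else 0)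
      = q * (Finset.univ.filter fun w : V' => (w : V) ∈ s).card := by
    rw [Fintype.sum_prod_type, Finset.sum_comm]
    simp [Finset.sum_boole]
  rw [hsum, Fintype.card_coe]
  rcases eq_or_ne q 0 with rfl | hq
  · simp only [Nat.cast_zero, mul_zero, div_zero, zero_mul]
    positivity
  · rw [one_div_mul_eq_div, mul_comm (V'.card : ℝ),
      mul_div_mul_left _ _ (Nat.cast_ne_zero.mpr hq : (q : ℝ) ≠ 0)]
    gcongr

variable {V : Type} [Fintype V] [DecidableEq V] {q : ℕ}

theorem hamming_flipCol_le (X : V → Fin q) (S : Finset V) (a c : Fin q) :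
    hamming X (flipCol X S a c) ≤ S.card := by
  refine Nat.cast_le.mpr (Finset.card_le_card fun w hw => ?_)
  by_contra h
  simp [flipCol, h] at hw

section Walks

variable (G : SimpleGraph V)

def walkEnds (v : V) (i : ℕ) : Finset V :=
  Finset.univ.filter fun x => ∃ p : G.Walk v x, p.length = i

theorem walkEnds_succ_subset [DecidableRel G.Adj] (v : V) (i : ℕ) :
    walkEnds G v (i + 1) ⊆ (G.neighborFinset v).biUnion fun u => walkEnds G u i := by
  intro x hx
  obtain ⟨p, hp⟩ := (Finset.mem_filter.mp hx).2
  cases p with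
  | nil => simp at hp
  | cons h p =>
    exact Finset.mem_biUnion.mpr ⟨_, (G.mem_neighborFinset _ _).mpr h,
      Finset.mem_filter.mpr ⟨Finset.mem_univ _, p, by simpa using hp⟩⟩

theorem card_walkEnds_le [DecidableRel G.Adj] {Δ : ℕ} (hdeg : ∀ u, G.degree u ≤ Δ)
    (v : V) (i : ℕ) : (walkEnds G v i).card ≤ Δ ^ i := by
  induction i generalizing v with
  | zero =>
    refine (Finset.card_le_card fun x hx => ?_).trans (Finset.card_singleton v).le
    obtain ⟨p, hp⟩ := (Finset.mem_filter.mp hx).2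
    exact Finset.mem_singleton.mpr (SimpleGraph.Walk.eq_of_length_eq_zero hp).symm
  | succ i ih =>
    calc (walkEnds G v (i + 1)).card
        ≤ (G.neighborFinset v).card * Δ ^ i :=
          (Finset.card_le_card (walkEnds_succ_subset G v i)).trans
            (Finset.card_biUnion_le_card_mul _ _ _ fun u _ => ih u)
      _ ≤ Δ ^ (i + 1) := by
          rw [pow_succ', G.card_neighborFinset_eq_degree]
          exact Nat.mul_le_mul_right _ (hdeg v)

theorem card_biUnion_walkEnds_le [DecidableRel G.Adj] {Δ : ℕ} (hdeg : ∀ u, G.degree u ≤ Δ)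
    (v : V) (k : ℕ) : ((Finset.Icc 1 k).biUnion (walkEnds G v)).card ≤ k * Δ ^ k := by
  refine (Finset.card_biUnion_le_card_mul _ _ (Δ ^ k) fun i hi => ?_).trans_eq (by simp)
  obtain ⟨hi1, hik⟩ := Finset.mem_Icc.mp hi
  refine (card_walkEnds_le G hdeg v i).trans ?_
  rcases Nat.eq_zero_or_pos Δ with rfl | hΔ
  · simp [Nat.pos_iff_ne_zero.mp hi1]
  · exact Nat.pow_le_pow_right hΔ hik

end Walks

theorem exists_walk_length_lt_card_of_mem_kempeComponent (G : SimpleGraph V)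
    (X : V → Fin q) {w u : V} {c : Fin q} (hu : u ∈ kempeComponent G X w c) :
    ∃ p : G.Walk w u, p.length < (kempeComponent G X w c).card := by
  by_cases hc : c = X w
  · simp [kempeComponent, hc] at hu
  simp only [kempeComponent, if_neg hc, Finset.mem_filter, Finset.mem_univ, true_and] at hu ⊢
  obtain ⟨p⟩ := hu
  refine ⟨p.bypass.mapLe fun _ _ (hab : (kempeGraph G X (X w) c).Adj _ _) => hab.1, ?_⟩
  -- a path has a duplicate-free support, and it stays inside the component
  have hsupp : p.bypass.support.toFinset ⊆ Finset.univ.filter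
      fun x => (kempeGraph G X (X w) c).Reachable w x := fun x hx =>
    Finset.mem_filter.mpr ⟨Finset.mem_univ _, ⟨p.bypass.takeUntil x (List.mem_toFinset.mp hx)⟩⟩
  have := Finset.card_le_card hsupp
  rw [List.toFinset_card_of_nodup p.bypass_isPath.support_nodup,
    SimpleGraph.Walk.length_support] at this
  simpa [SimpleGraph.Walk.mapLe] using this

section Moves

variable (G : SimpleGraph V) (L L' : V → Finset (Fin q)) (p : ℕ → ℝ) (X : V → Fin q)
  (v : V) (c : Fin q)

def FlipAllowed : Prop :=
  (kempeComponent G X v c).card ≠ 0 ∧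
    ∀ u ∈ kempeComponent G X v c, flipCol X (kempeComponent G X v c) (X v) c u ∈ L u

def flipMove : (V → Fin q) → ℝ := fun Y =>
  if FlipAllowed G L X v c then
    (p (kempeComponent G X v c).card / ((kempeComponent G X v c).card : ℝ)) *
        (if Y = flipCol X (kempeComponent G X v c) (X v) c then 1 else 0) +
      (1 - p (kempeComponent G X v c).card / ((kempeComponent G X v c).card : ℝ)) *
        (if Y = X then 1 else 0)
  else (if Y = X then 1 else 0)

theorem flipStep_eq_sum_flipMove :
    flipStep G L p X = fun Y =>
      (1 / ((Fintype.card V : ℝ) * q)) * ∑ m : V × Fin q, flipMove G L p X m.1 m.2 Y := by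
  funext Y
  rw [Fintype.sum_prod_type, flipStep]
  refine congrArg (_ * ·) (Finset.sum_congr rfl fun w _ => Finset.sum_congr rfl fun c _ => ?_)
  unfold flipMove FlipAllowed
  congr 1

variable {G L L' p X v c}

theorem FlipAllowed.mono (hsub : ∀ u, L u ⊆ L' u) (h : FlipAllowed G L X v c) :
    FlipAllowed G L' X v c :=
  ⟨h.1, fun u hu => hsub u (h.2 u hu)⟩

theorem exists_mem_kempeComponent_ne_of_flipAllowed (h' : FlipAllowed G L' X v c)
    (h : ¬ FlipAllowed G L X v c) : ∃ u ∈ kempeComponent G X v c, L u ≠ L' u := by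
  by_contra! hL
  exact h ⟨h'.1, fun u hu => hL u hu ▸ h'.2 u hu⟩

theorem flipMove_eq_of_flipAllowed (h : FlipAllowed G L X v c) (h' : FlipAllowed G L' X v c) :
    flipMove G L p X v c = flipMove G L' p X v c := by
  funext Y
  simp only [flipMove, if_pos h, if_pos h']

theorem isDist_flipMove (hp : ∀ ℓ, 0 ≤ p ℓ ∧ p ℓ ≤ 1) : IsDist (flipMove G L p X v c) := by
  by_cases h : FlipAllowed G L X v c
  · set ℓ := (kempeComponent G X v c).card
    have hℓ : (0 : ℝ) < ℓ := Nat.cast_pos.mpr (Nat.pos_of_ne_zero h.1)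
    have h0 : 0 ≤ p ℓ / ℓ := div_nonneg (hp ℓ).1 hℓ.le
    have h1 : p ℓ / ℓ ≤ 1 :=
      (div_le_one hℓ).mpr ((hp ℓ).2.trans (Nat.one_le_cast.mpr (Nat.one_le_iff_ne_zero.mpr h.1)))
    refine ⟨fun Y => ?_, ?_⟩
    · simp only [flipMove, if_pos h]
      have : 0 ≤ 1 - p ℓ / ℓ := by linarith
      positivity
    · simp [flipMove, if_pos h, Finset.sum_add_distrib]
  · refine ⟨fun Y => ?_, by simp [flipMove, if_neg h]⟩
    simp only [flipMove, if_neg h]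
    positivity

theorem sum_flipMove_mul_hamming_le (hp : ∀ ℓ, 0 ≤ p ℓ ∧ p ℓ ≤ 1) :
    ∑ Y, flipMove G L p X v c Y * hamming X Y
      ≤ if FlipAllowed G L X v c then p (kempeComponent G X v c).card else 0 := by
  set ℓ := (kempeComponent G X v c).card
  by_cases h : FlipAllowed G L X v c
  · have hℓ : (0 : ℝ) < ℓ := Nat.cast_pos.mpr (Nat.pos_of_ne_zero h.1)
    simp only [flipMove, if_pos h, add_mul, mul_assoc, ite_mul, one_mul, zero_mul,
      Finset.sum_add_distrib, ← Finset.mul_sum, Fintype.sum_ite_eq', hamming_self, mul_zero,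
      add_zero]
    calc p ℓ / ℓ * hamming X (flipCol X (kempeComponent G X v c) (X v) c)
        ≤ p ℓ / ℓ * ℓ :=
          mul_le_mul_of_nonneg_left (hamming_flipCol_le _ _ _ _) (div_nonneg (hp ℓ).1 hℓ.le)
      _ = p ℓ := div_mul_cancel₀ _ hℓ.ne'
  · simp [flipMove, if_neg h, hamming_self]

variable (G L L' p X v c) in
def moveCoupling : (V → Fin q) × (V → Fin q) → ℝ := fun P =>
  if FlipAllowed G L X v c then (if P.1 = P.2 then flipMove G L p X v c P.1 else 0)
  else flipMove G L p X v c P.1 * flipMove G L' p X v c P.2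

theorem isCoupling_moveCoupling (hp : ∀ ℓ, 0 ≤ p ℓ ∧ p ℓ ≤ 1) (hsub : ∀ u, L u ⊆ L' u) :
    IsCoupling (moveCoupling G L L' p X v c) (flipMove G L p X v c) (flipMove G L' p X v c) := by
  have hL : IsDist (flipMove G L p X v c) := isDist_flipMove hp
  by_cases h : FlipAllowed G L X v c
  · rw [← flipMove_eq_of_flipAllowed (p := p) h (h.mono hsub)]
    unfold moveCoupling
    simpa only [if_pos h] using isCoupling_diag hL.1
  · have hL' : IsDist (flipMove G L' p X v c) := isDist_flipMove hp
    unfold moveCoupling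
    simpa only [if_neg h] using isCoupling_prod hL hL'

theorem sum_moveCoupling_mul_hamming_le (hp : ∀ ℓ, 0 ≤ p ℓ ∧ p ℓ ≤ 1) :
    ∑ P, moveCoupling G L L' p X v c P * hamming P.1 P.2
      ≤ if FlipAllowed G L' X v c ∧ ¬ FlipAllowed G L X v c
        then p (kempeComponent G X v c).card else 0 := by
  by_cases h : FlipAllowed G L X v c
  · simp [moveCoupling, h, Fintype.sum_prod_type, ite_mul, hamming_self]
  · have hL : flipMove G L p X v c = fun Y => if Y = X then 1 else 0 := by
      funext Y
      simp [flipMove, h]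
    calc ∑ P, moveCoupling G L L' p X v c P * hamming P.1 P.2
        = ∑ Y, flipMove G L' p X v c Y * hamming X Y := by
          simp [moveCoupling, h, hL, Fintype.sum_prod_type, ite_mul]
      _ ≤ _ := (sum_flipMove_mul_hamming_le hp).trans_eq (by simp [h])

end Moves

theorem mem_biUnion_walkEnds_of_flipAllowed {W : Type} [Fintype W] [DecidableEq W]
    {H : SimpleGraph W} {G : SimpleGraph V} (f : H →g G) {v : V} {L L' : W → Finset (Fin q)}
    (heq : ∀ u, ¬ G.Adj v (f u) → L u = L' u) {X : W → Fin q} {w : W} {c : Fin q}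
    (h' : FlipAllowed H L' X w c) (h : ¬ FlipAllowed H L X w c) :
    f w ∈ (Finset.Icc 1 (kempeComponent H X w c).card).biUnion (walkEnds G v) := by
  obtain ⟨u, hu, hne⟩ := exists_mem_kempeComponent_ne_of_flipAllowed h' h
  have hadj : G.Adj v (f u) := by
    by_contra hna
    exact hne (heq u hna)
  obtain ⟨r, hr⟩ := exists_walk_length_lt_card_of_mem_kempeComponent H X hu
  exact Finset.mem_biUnion.mpr ⟨r.length + 1, Finset.mem_Icc.mpr ⟨by omega, by omega⟩,
    Finset.mem_filter.mpr ⟨Finset.mem_univ _, .cons hadj (r.map f).reverse, by simp⟩⟩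

end SpinFormal

open SpinFormal

theorem flip_one_step_disagreement_general
    {V : Type} [Fintype V] [DecidableEq V] {q : ℕ}
    (Δ : ℕ)
    (G : SimpleGraph V) [DecidableRel G.Adj]
    (hdeg : ∀ u : V, G.degree u ≤ Δ)
    (v : V) (V' : Finset V)
    (L L' : {x : V // x ∈ V'} → Finset (Fin q))
    (hsub : ∀ u, L u ⊆ L' u)
    (heq : ∀ u : {x : V // x ∈ V'}, ¬ G.Adj v u.1 → L u = L' u)
    (p : ℕ → ℝ) (hp01 : ∀ ℓ : ℕ, 0 ≤ p ℓ ∧ p ℓ ≤ 1) (hp6 : ∀ ℓ : ℕ, 6 < ℓ → p ℓ = 0)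
    (X : {x : V // x ∈ V'} → Fin q) :
    Wass hamming
        (flipStep (SimpleGraph.comap Subtype.val G) L p X)
        (flipStep (SimpleGraph.comap Subtype.val G) L' p X)
      ≤ 12 * (Δ : ℝ) ^ 7 / (V'.card : ℝ) := by
  set G' := SimpleGraph.comap (Subtype.val : V' → V) G
  set B := (Finset.Icc 1 6).biUnion (walkEnds G v)
  -- only moves at the ends `w` of walks of length `1, …, 6` from `v` can create disagreements
  have hcost : ∀ m : V' × Fin q, ∑ P, moveCoupling G' L L' p X m.1 m.2 P * hamming P.1 P.2
      ≤ if (m.1 : V) ∈ B then 1 else 0 := by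
    rintro ⟨w, c⟩
    refine (sum_moveCoupling_mul_hamming_le hp01).trans ?_
    split_ifs with hflip hwB
    · exact (hp01 _).2
    · by_contra hpos
      have hS : (kempeComponent G' X w c).card ≤ 6 := by
        by_contra! hS
        exact hpos (hp6 _ hS).le
      exact hwB (Finset.biUnion_subset_biUnion_of_subset_left _ (Finset.Icc_subset_Icc_right hS)
        (mem_biUnion_walkEnds_of_flipAllowed (SimpleGraph.Hom.comap Subtype.val G) heq
          hflip.1 hflip.2))
    · positivity
    · rfl
  have hB : B.card ≤ 12 * Δ ^ 7 := by
    refine (card_biUnion_walkEnds_le G hdeg v 6).trans ?_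
    rcases Nat.eq_zero_or_pos Δ with rfl | hΔ
    · simp
    · exact Nat.mul_le_mul (by norm_num) (Nat.pow_le_pow_right hΔ (by norm_num))
  rw [flipStep_eq_sum_flipMove, flipStep_eq_sum_flipMove]
  calc _ ≤ _ := wass_const_mul_sum_le hamming_nonneg (by positivity)
          fun m => isCoupling_moveCoupling hp01 hsub
    _ ≤ 1 / ((Fintype.card V' : ℝ) * q) * ∑ m : V' × Fin q, if (m.1 : V) ∈ B then 1 else 0 := by
        gcongr with m
        exact hcost m
    _ ≤ B.card / V'.card := one_div_card_mul_sum_mem_le V' B q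
    _ ≤ 12 * (Δ : ℝ) ^ 7 / (V'.card : ℝ) := by
        gcongr
        exact_mod_cast hB

/-- one step of the flip dynamics on the induced subgraph `G' = G[V']`
with two list systems differing only on the neighbourhood of `v ∉ V'` can be coupled
with expected Hamming disagreement at most `12Δ⁷/n`. -/
theorem flip_one_step_disagreement
    {V : Type} [Fintype V] [DecidableEq V] {q : ℕ}
    (Δ : ℕ) (hΔ : 2 ≤ Δ)
    (G : SimpleGraph V) [DecidableRel G.Adj]
    (hdeg : ∀ u : V, G.degree u ≤ Δ)
    (v : V) (V' : Finset V) (hv : v ∉ V') (hne : V'.Nonempty)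
    (L L' : {x : V // x ∈ V'} → Finset (Fin q))
    (hsub : ∀ u, L u ⊆ L' u)
    (heq : ∀ u : {x : V // x ∈ V'}, ¬ G.Adj v u.1 → L u = L' u)
    (p : ℕ → ℝ) (hp01 : ∀ ℓ : ℕ, 0 ≤ p ℓ ∧ p ℓ ≤ 1) (hp6 : ∀ ℓ : ℕ, 6 < ℓ → p ℓ = 0)
    (X : {x : V // x ∈ V'} → Fin q)
    (hX : ProperListCol (SimpleGraph.comap Subtype.val G) L X) :
    Wass hamming
        (flipStep (SimpleGraph.comap Subtype.val G) L p X)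
        (flipStep (SimpleGraph.comap Subtype.val G) L' p X)
      ≤ 12 * (Δ : ℝ) ^ 7 / (V'.card : ℝ) :=
  flip_one_step_disagreement_general Δ G hdeg v V' L L' hsub heq p hp01 hp6 X
end
end
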